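/- arXiv:2304.03042 — 4 statements merged into one kernel-verified Lean document; each statement's English description precedes it below -/
import Mathlib

section
/- Let T > 0, γ > 0 and N ∈ ℕ with N ≥ 1. Set Δ := T/N and t_i := i·Δ for i = 0,…,N. Then ∑_{i=0}^{N-1} ∫_{t_i}^{t_{i+1}} (t^γ − t_i^γ) dt ≤ T^γ · Δ. In particular, even though the local error t^γ − t_i^γ is only of order Δ^γ, the global (summed and integrated) error is of order Δ = T/N. -/
/-! On each cell `[t_i, t_{i+1}]` the integrand `t^γ - t_i^γ` of the monotone function `t ↦ t^γ`
is at most its increment `t_{i+1}^γ - t_i^γ` over the cell, so the summed errors telescope to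
`Δ * (t_N^γ - 0^γ) ≤ T^γ * Δ`. -/

open MeasureTheory Real

theorem MonotoneOn.intervalIntegral_sub_le_mul {f : ℝ → ℝ} {a b : ℝ} (hab : a ≤ b)
    (hf : MonotoneOn f (Set.Icc a b)) :
    ∫ t in a..b, (f t - f a) ≤ (b - a) * (f b - f a) := by
  have hfab : MonotoneOn f (Set.uIcc a b) := by rwa [Set.uIcc_of_le hab]
  have hle : ∫ t in a..b, (f t - f a) ≤ ∫ _ in a..b, (f b - f a) := by
    refine intervalIntegral.integral_mono_on hab
      ((hfab.intervalIntegrable (μ := volume)).sub intervalIntegrable_const)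
      intervalIntegrable_const fun t ht => ?_
    exact sub_le_sub_right (hf ht (Set.right_mem_Icc.2 hab) ht.2) _
  simpa only [intervalIntegral.integral_const, smul_eq_mul] using hle

theorem MonotoneOn.sum_intervalIntegral_sub_le_mul {f : ℝ → ℝ} {Δ : ℝ} (hΔ : 0 ≤ Δ) (N : ℕ)
    (hf : MonotoneOn f (Set.Icc 0 (N * Δ))) :
    ∑ i ∈ Finset.range N, ∫ t in ((i : ℝ) * Δ)..(((i : ℝ) + 1) * Δ), (f t - f (i * Δ))
      ≤ Δ * (f (N * Δ) - f 0) := by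
  calc ∑ i ∈ Finset.range N, ∫ t in ((i : ℝ) * Δ)..(((i : ℝ) + 1) * Δ), (f t - f (i * Δ))
      ≤ ∑ i ∈ Finset.range N, Δ * (f (((i + 1 : ℕ) : ℝ) * Δ) - f ((i : ℕ) * Δ)) := by
        refine Finset.sum_le_sum fun i hi => ?_
        have hiN : (i : ℝ) + 1 ≤ N := by exact_mod_cast Finset.mem_range.1 hi
        have hsub : Set.Icc ((i : ℝ) * Δ) ((i + 1) * Δ) ⊆ Set.Icc 0 (N * Δ) :=
          Set.Icc_subset_Icc (by positivity) (mul_le_mul_of_nonneg_right hiN hΔ)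
        have := (hf.mono hsub).intervalIntegral_sub_le_mul (by nlinarith)
        push_cast
        linarith
    _ = Δ * (f (N * Δ) - f 0) := by
        rw [← Finset.mul_sum, Finset.sum_range_sub (fun n : ℕ => f (n * Δ)), Nat.cast_zero,
          zero_mul]

theorem sum_integral_rpow_sub_le_general (T γ : ℝ) (hT : 0 < T) (hγ : 0 < γ)
    (N : ℕ) :
    ∑ i ∈ Finset.range N,
      ∫ t in ((i : ℝ) * (T / N))..(((i : ℝ) + 1) * (T / N)),
        (t ^ γ - ((i : ℝ) * (T / N)) ^ γ)
      ≤ T ^ γ * (T / N) := by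
  have hΔ : 0 ≤ T / N := by positivity
  -- an inequality, not an equality: for `N = 0` the mesh is the junk value `T / 0 = 0`
  have hgrid : (N : ℝ) * (T / N) ≤ T := by
    rcases N.eq_zero_or_pos with rfl | hN
    · simpa using hT.le
    · rw [mul_div_cancel₀ _ (by positivity)]
  have hmono : MonotoneOn (fun t : ℝ => t ^ γ) (Set.Ici 0) :=
    monotoneOn_rpow_Ici_of_exponent_nonneg hγ.le
  calc _ ≤ T / N * ((N * (T / N)) ^ γ - (0 : ℝ) ^ γ) :=
        (hmono.mono Set.Icc_subset_Ici_self).sum_intervalIntegral_sub_le_mul hΔ N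
    _ ≤ T ^ γ * (T / N) := by
        rw [zero_rpow hγ.ne', sub_zero, mul_comm]
        gcongr

/-- For a uniform grid `t_i = i * (T/N)` on `[0,T]` with mesh `Δ = T/N`,
the summed and integrated local error `∑ᵢ ∫_{tᵢ}^{tᵢ₊₁} (t^γ - tᵢ^γ) dt` is bounded by
`T^γ * Δ`. -/
theorem sum_integral_rpow_sub_le (T γ : ℝ) (hT : 0 < T) (hγ : 0 < γ)
    (N : ℕ) (hN : 1 ≤ N) :
    ∑ i ∈ Finset.range N,
      ∫ t in ((i : ℝ) * (T / N))..(((i : ℝ) + 1) * (T / N)),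
        (t ^ γ - ((i : ℝ) * (T / N)) ^ γ)
      ≤ T ^ γ * (T / N) :=
  sum_integral_rpow_sub_le_general T γ hT hγ N
end

section
/- Let H ∈ (0,1/2) and 0 ≤ s ≤ t. Then ∫_0^t |K(t,r) − K(s,r)| dr = (s^{H+1/2} − t^{H+1/2} + 2(t−s)^{H+1/2})/(H+1/2), and consequently ∫_0^t |K(t,r) − K(s,r)| dr ≤ 2(t−s)^{H+1/2}/(H+1/2). -/
open MeasureTheory Real

/-- The Riemann–Liouville kernel `K(t,s) = (t-s)^(H-1/2)` for `s < t`, and `0` for `s ≥ t`. -/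
noncomputable def K (H t s : ℝ) : ℝ :=
  if s < t then (t - s) ^ (H - 1/2) else 0

/-!
On `[s, t]` the kernel `K(s, ·)` vanishes, while on `[0, s)` the kernel `K(s, ·)` dominates
`K(t, ·)` because the exponent `H - 1/2` is nonpositive. Hence the absolute value can be removed
on each piece, and the integral is a sum of integrals of `r ↦ (u - r)^(H-1/2)`, which are explicit.
-/

open Set

theorem intervalIntegrable_sub_rpow {α : ℝ} (hα : -1 < α) (u a b : ℝ) :
    IntervalIntegrable (fun r => (u - r) ^ α) volume a b := by
  simpa using
    (intervalIntegral.intervalIntegrable_rpow' hα (a := u - a) (b := u - b)).comp_sub_left u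

theorem integral_sub_rpow {α : ℝ} (hα : -1 < α) (u a b : ℝ) :
    ∫ r in a..b, (u - r) ^ α = ((u - a) ^ (α + 1) - (u - b) ^ (α + 1)) / (α + 1) := by
  rw [intervalIntegral.integral_comp_sub_left (fun x => x ^ α) u, integral_rpow (Or.inl hα)]

namespace K

variable {H t r : ℝ}

theorem of_lt (h : r < t) : K H t r = (t - r) ^ (H - 1/2) := if_pos h

theorem of_le (h : t ≤ r) : K H t r = 0 := if_neg h.not_gt

theorem nonneg : 0 ≤ K H t r := by
  unfold K
  split_ifs with h
  exacts [rpow_nonneg (sub_nonneg.mpr h.le) _, le_rfl]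

theorem antitoneOn (hH : H ≤ 1/2) : AntitoneOn (fun t => K H t r) (Ioi r) := by
  intro s (hs : r < s) t (ht : r < t) hst
  simp only [of_lt ht, of_lt hs]
  exact rpow_le_rpow_of_nonpos (sub_pos.mpr hs) (by linarith) (by linarith)

theorem abs_sub_of_lt {s : ℝ} (hH : H ≤ 1/2) (hrs : r < s) (hst : s ≤ t) :
    |K H t r - K H s r| = K H s r - K H t r := by
  rw [abs_of_nonpos (sub_nonpos.mpr (antitoneOn hH hrs (hrs.trans_le hst) hst)), neg_sub]

theorem abs_sub_of_le {s : ℝ} (hsr : s ≤ r) : |K H t r - K H s r| = K H t r := by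
  rw [of_le hsr, sub_zero, abs_of_nonneg nonneg]

theorem eqOn_Ioo {a b : ℝ} (hbt : b ≤ t) :
    EqOn (K H t) (fun r => (t - r) ^ (H - 1/2)) (Ioo a b) :=
  fun _ hr => of_lt (hr.2.trans_le hbt)

theorem intervalIntegrable (hH : -1/2 < H) {a b : ℝ} (hab : a ≤ b) (hbt : b ≤ t) :
    IntervalIntegrable (K H t) volume a b :=
  (intervalIntegrable_sub_rpow (α := H - 1/2) (by linarith) t a b).congr_uIoo
    (by rw [uIoo_of_le hab]; exact (eqOn_Ioo hbt).symm)

theorem integral (hH : -1/2 < H) {a b : ℝ} (hab : a ≤ b) (hbt : b ≤ t) :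
    ∫ r in a..b, K H t r = ((t - a) ^ (H + 1/2) - (t - b) ^ (H + 1/2)) / (H + 1/2) := by
  rw [intervalIntegral.integral_congr_Ioo_of_le hab (eqOn_Ioo hbt),
    integral_sub_rpow (by linarith), show H - 1/2 + 1 = H + 1/2 by ring]

theorem integral_abs_sub (hH : H ∈ Ioc (-1/2 : ℝ) (1/2)) {s : ℝ} (hs : 0 ≤ s) (hst : s ≤ t) :
    ∫ r in (0 : ℝ)..t, |K H t r - K H s r| =
      (s ^ (H + 1/2) - t ^ (H + 1/2) + 2 * (t - s) ^ (H + 1/2)) / (H + 1/2) := by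
  obtain ⟨hH0, hH1⟩ := hH
  have below : EqOn (fun r => |K H t r - K H s r|) (fun r => K H s r - K H t r) (Ioo 0 s) :=
    fun _ hr => abs_sub_of_lt hH1 hr.2 hst
  have above : EqOn (fun r => |K H t r - K H s r|) (K H t) (Ioo s t) :=
    fun _ hr => abs_sub_of_le hr.1.le
  have hKs := intervalIntegrable hH0 hs le_rfl
  have hKt := intervalIntegrable hH0 hs hst
  rw [← intervalIntegral.integral_add_adjacent_intervals
      ((hKs.sub hKt).congr_uIoo (by rw [uIoo_of_le hs]; exact below.symm))
      ((intervalIntegrable hH0 hst le_rfl).congr_uIoo (by rw [uIoo_of_le hst]; exact above.symm)),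
    intervalIntegral.integral_congr_Ioo_of_le hs below,
    intervalIntegral.integral_congr_Ioo_of_le hst above,
    intervalIntegral.integral_sub hKs hKt, integral hH0 hs le_rfl, integral hH0 hs hst,
    integral hH0 hst le_rfl, sub_self, sub_self, zero_rpow (by linarith)]
  simp only [sub_zero]
  ring

end K

/-- For `H ∈ (0,1/2)` and `0 ≤ s ≤ t`,
`∫₀ᵗ |K(t,r) - K(s,r)| dr = (s^(H+1/2) - t^(H+1/2) + 2 (t-s)^(H+1/2)) / (H+1/2)`, and
consequently `∫₀ᵗ |K(t,r) - K(s,r)| dr ≤ 2 (t-s)^(H+1/2) / (H+1/2)`. -/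
theorem integral_abs_kernel_sub_eq_and_le
    (H s t : ℝ) (hH : H ∈ Set.Ioo (0 : ℝ) (1/2)) (hs : 0 ≤ s) (hst : s ≤ t) :
    (∫ r in (0 : ℝ)..t, |K H t r - K H s r| =
      (s ^ (H + 1/2) - t ^ (H + 1/2) + 2 * (t - s) ^ (H + 1/2)) / (H + 1/2)) ∧
    (∫ r in (0 : ℝ)..t, |K H t r - K H s r| ≤
      2 * (t - s) ^ (H + 1/2) / (H + 1/2)) := by
  obtain ⟨hH0, hH1⟩ := hH
  have hp : 0 < H + 1/2 := by linarith
  have heq := K.integral_abs_sub ⟨by linarith, hH1.le⟩ hs hst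
  refine ⟨heq, heq.trans_le (div_le_div_of_nonneg_right ?_ hp.le)⟩
  linarith [rpow_le_rpow hs hst hp.le]
end

section
/- Let H ∈ (0,1/2), t > 0, n ≥ 1 and 1 ≤ k ≤ n. Let I_1,…,I_k be pairwise disjoint nonempty subsets of {1,…,n} whose union is {1,…,n}, set n_l := |I_l|, and for each l ∈ {1,…,k} fix an element m_l ∈ I_l. Then ∫_{[0,t]^n} ∏_{l=1}^k [ (t − s_{m_l})^{H−1/2} · ∏_{j ∈ I_l \ {m_l}} (t − s_j)^{H−1/2} (s_{m_l} − s_j)_+^{H−1/2} ] ds_1 … ds_n ≤ (2H)^{−(n−k)} · t^{2H(n−k) + k(H+1/2)} · ∏_{l=1}^k B(2H(n_l − 1) + 1, H + 1/2), where for x ∈ ℝ, x_+^{H−1/2} := x^{H−1/2} if x > 0 and 0 otherwise. -/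
open MeasureTheory Real

/-- The Beta function `B(a,b) = ∫₀¹ u^(a-1) (1-u)^(b-1) du`. -/
noncomputable def Beta (a b : ℝ) : ℝ :=
  ∫ u in (0 : ℝ)..1, u ^ (a - 1) * (1 - u) ^ (b - 1)

/-- `x₊^e := x^e` if `x > 0` and `0` otherwise. -/
noncomputable def posRpow (x e : ℝ) : ℝ :=
  if 0 < x then x ^ e else 0

/-!
The integrand factorizes over the blocks `I_l`, which involve disjoint sets of variables, so by
Tonelli the integral is at most the product of the block integrals. In the block with marked
variable `u = s_{m_l}`, each unmarked variable contributes
`∫₀ᵗ (t-y)^(H-1/2) (u-y)₊^(H-1/2) dy ≤ ∫₀^u (u-y)^(2H-1) dy = u^(2H)/(2H)`: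
as `H - 1/2 < 0`, both factors are at most `(min u t - y)^(H-1/2)`. What is left of the block is
`(2H)^(-(n_l-1)) ∫₀ᵗ (t-u)^(H-1/2) u^(2H(n_l-1)) du`, a Beta integral equal to
`t^(2H(n_l-1)+H+1/2) B(2H(n_l-1)+1, H+1/2)`.

All integrals are taken in `ℝ≥0∞` of `‖·‖ₑ` of the integrand: `‖·‖ₑ` is multiplicative, and it
agrees with the integrand on `[0,t]ⁿ`, whereas outside that box `Real.rpow` of a negative base can
be negative.
-/

open Function Finset Set
open scoped ENNReal

theorem enorm_prod {α β : Type*} [SeminormedCommRing α] [NormMulClass α] [NormOneClass α]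
    (s : Finset β) (f : β → α) : ‖∏ b ∈ s, f b‖ₑ = ∏ b ∈ s, ‖f b‖ₑ := by
  simp [enorm]

theorem integral_le_of_lintegral_enorm_le {α : Type*} [MeasurableSpace α] {μ : Measure α}
    {f : α → ℝ} {c : ℝ} (hc : 0 ≤ c) (h : ∫⁻ x, ‖f x‖ₑ ∂μ ≤ ENNReal.ofReal c) :
    ∫ x, f x ∂μ ≤ c := by
  refine (le_abs_self _).trans ?_
  rw [← Real.norm_eq_abs]
  refine (norm_integral_le_lintegral_norm f).trans (ENNReal.toReal_le_of_le_ofReal hc ?_)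
  simpa only [ofReal_norm] using h

theorem volume_restrict_Icc_eq_pi {ι : Type*} [Fintype ι] (a b : ι → ℝ) :
    (volume : Measure (ι → ℝ)).restrict (Icc a b) =
      Measure.pi fun i => volume.restrict (Icc (a i) (b i)) := by
  rw [← pi_univ_Icc, volume_pi, Measure.restrict_pi_pi]

theorem sum_card_erase_add_card_eq_card_biUnion {κ α : Type*} [DecidableEq α] {L : Finset κ}
    {I : κ → Finset α} (hI : (L : Set κ).PairwiseDisjoint I) {m : κ → α}
    (hm : ∀ l ∈ L, m l ∈ I l) :
    ∑ l ∈ L, #((I l).erase (m l)) + #L = #(L.biUnion I) := by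
  rw [card_biUnion hI, card_eq_sum_ones, ← sum_add_distrib]
  exact sum_congr rfl fun l hl => card_erase_add_one (hm l hl)

section LMarginal

variable {δ κ : Type*} [DecidableEq δ] {X : δ → Type*} [∀ i, MeasurableSpace (X i)]
  {μ : ∀ i, Measure (X i)}

theorem lmarginal_mul_of_dependsOn {s : Finset δ} {f g : (∀ i, X i) → ℝ≥0∞}
    (hf : Measurable f) (hg : DependsOn g (↑s)ᶜ) :
    ∫⋯∫⁻_s, (fun x => g x * f x) ∂μ = fun x => g x * (∫⋯∫⁻_s, f ∂μ) x := by
  ext x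
  have hgx : ∀ y, g (updateFinset x s y) = g x := fun y =>
    hg fun i hi => by simp [updateFinset, show i ∉ s from hi]
  simp only [lmarginal, hgx]
  exact lintegral_const_mul _ (hf.comp measurable_updateFinset)

variable [∀ i, SigmaFinite (μ i)]

theorem lmarginal_biUnion_prod_le {L : Finset κ} {S : κ → Finset δ}
    (hS : (L : Set κ).PairwiseDisjoint S) {F c : κ → (∀ i, X i) → ℝ≥0∞}
    (hF : ∀ l, Measurable (F l))
    (hFdep : ∀ l ∈ L, DependsOn (F l) (↑(S l) ∪ (↑(L.biUnion S))ᶜ))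
    (hcdep : ∀ l ∈ L, DependsOn (c l) (↑(L.biUnion S))ᶜ)
    (hle : ∀ l ∈ L, ∫⋯∫⁻_(S l), F l ∂μ ≤ c l) :
    ∫⋯∫⁻_(L.biUnion S), (fun x => ∏ l ∈ L, F l x) ∂μ ≤ fun x => ∏ l ∈ L, c l x := by
  classical
  induction L using Finset.induction_on with
  | empty => simp
  | @insert a L haL ih =>
    set T := L.biUnion S
    have hST : Disjoint (S a) T := (disjoint_biUnion_right _ _ _).mpr fun l hl =>
      hS (mem_insert_self a L) (mem_insert_of_mem hl) fun hal => haL (hal ▸ hl)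
    have hT : (↑((insert a L).biUnion S) : Set δ)ᶜ ⊆ (↑T)ᶜ := by
      gcongr; simp [T, Finset.biUnion_insert]
    have hSa : (↑((insert a L).biUnion S) : Set δ)ᶜ ⊆ (↑(S a))ᶜ := by
      gcongr; simp [Finset.biUnion_insert]
    have hFa : DependsOn (F a) (↑T)ᶜ := (hFdep a (mem_insert_self a L)).mono <|
      Set.union_subset (Set.subset_compl_iff_disjoint_right.mpr (mod_cast hST)) hT
    have hcL : DependsOn (fun x => ∏ l ∈ L, c l x) (↑(S a))ᶜ := fun x y hxy =>
      prod_congr rfl fun l hl => (hcdep l (mem_insert_of_mem hl)).mono hSa hxy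
    have ih' : ∫⋯∫⁻_T, (fun x => ∏ l ∈ L, F l x) ∂μ ≤ fun x => ∏ l ∈ L, c l x :=
      ih (hS.subset (by simp))
        (fun l hl => (hFdep l (mem_insert_of_mem hl)).mono (Set.union_subset_union_right _ hT))
        (fun l hl => (hcdep l (mem_insert_of_mem hl)).mono hT)
        (fun l hl => hle l (mem_insert_of_mem hl))
    intro x
    rw [Finset.biUnion_insert, lmarginal_union _ _ (measurable_prod _ fun l _ => hF l) hST]
    simp only [prod_insert haL]
    calc (∫⋯∫⁻_(S a), ∫⋯∫⁻_T, (fun x => F a x * ∏ l ∈ L, F l x) ∂μ ∂μ) x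
        = (∫⋯∫⁻_(S a), fun x => F a x * (∫⋯∫⁻_T, (fun x => ∏ l ∈ L, F l x) ∂μ) x ∂μ) x := by
          rw [lmarginal_mul_of_dependsOn (measurable_prod _ fun l _ => hF l) hFa]
      _ ≤ (∫⋯∫⁻_(S a), fun x => (∏ l ∈ L, c l x) * F a x ∂μ) x := by
          refine lmarginal_mono (fun y => ?_) x
          rw [mul_comm]; gcongr; exact ih' y
      _ = (∏ l ∈ L, c l x) * (∫⋯∫⁻_(S a), F a ∂μ) x := by
          rw [lmarginal_mul_of_dependsOn (hF a) hcL]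
      _ ≤ c a x * ∏ l ∈ L, c l x := by
          rw [mul_comm]; gcongr; exact hle a (mem_insert_self a L) x

end LMarginal

theorem posRpow_nonneg (x e : ℝ) : 0 ≤ posRpow x e := by
  unfold posRpow; split_ifs with h
  exacts [rpow_nonneg h.le _, le_rfl]

theorem posRpow_of_nonpos {x : ℝ} (h : x ≤ 0) (e : ℝ) : posRpow x e = 0 := if_neg h.not_gt

theorem posRpow_of_pos {x : ℝ} (h : 0 < x) (e : ℝ) : posRpow x e = x ^ e := if_pos h

@[fun_prop]
theorem Measurable.posRpow {α : Type*} [MeasurableSpace α] {f : α → ℝ} (hf : Measurable f)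
    (e : ℝ) : Measurable fun x => posRpow (f x) e :=
  Measurable.ite (measurableSet_lt measurable_const hf) (by fun_prop) measurable_const

theorem Beta_nonneg (a b : ℝ) : 0 ≤ Beta a b :=
  intervalIntegral.integral_nonneg zero_le_one fun _ hu =>
    mul_nonneg (rpow_nonneg hu.1 _) (rpow_nonneg (sub_nonneg.mpr hu.2) _)

theorem integral_rpow_mul_sub_rpow_eq_mul_Beta (a b : ℝ) {t : ℝ} (ht : 0 < t) :
    ∫ y in (0:ℝ)..t, y ^ (a - 1) * (t - y) ^ (b - 1) = t ^ (a + b - 1) * Beta a b := by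
  have hscale : ∀ v ∈ uIcc (0:ℝ) 1, (t * v) ^ (a - 1) * (t - t * v) ^ (b - 1)
      = t ^ (a + b - 2) * (v ^ (a - 1) * (1 - v) ^ (b - 1)) := fun v hv => by
    rw [Set.uIcc_of_le zero_le_one] at hv
    rw [show t - t * v = t * (1 - v) by ring, mul_rpow ht.le hv.1,
      mul_rpow ht.le (sub_nonneg.mpr hv.2), show a + b - 2 = (a - 1) + (b - 1) by ring,
      rpow_add ht]
    ring
  have hsub := intervalIntegral.integral_comp_mul_left
    (fun y => y ^ (a - 1) * (t - y) ^ (b - 1)) (a := 0) (b := 1) ht.ne'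
  simp only [mul_zero, mul_one, smul_eq_mul] at hsub
  calc ∫ y in (0:ℝ)..t, y ^ (a - 1) * (t - y) ^ (b - 1)
      = t * ∫ v in (0:ℝ)..1, (t * v) ^ (a - 1) * (t - t * v) ^ (b - 1) := by
        rw [hsub, ← mul_assoc, mul_inv_cancel₀ ht.ne', one_mul]
    _ = t ^ (a + b - 1) * Beta a b := by
        rw [intervalIntegral.integral_congr hscale, intervalIntegral.integral_const_mul, Beta,
          show a + b - 1 = 1 + (a + b - 2) by ring, rpow_add ht, rpow_one, mul_assoc]

theorem lintegral_Icc_rpow_mul_sub_rpow {a b t : ℝ} (ha : 1 ≤ a) (hb : 0 < b) (ht : 0 < t) :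
    ∫⁻ y in Icc 0 t, ENNReal.ofReal (y ^ (a - 1) * (t - y) ^ (b - 1)) =
      ENNReal.ofReal (t ^ (a + b - 1) * Beta a b) := by
  have hdom : IntervalIntegrable (fun y => t ^ (a - 1) * (t - y) ^ (b - 1)) volume 0 t := by
    have h := (intervalIntegral.intervalIntegrable_rpow' (a := 0) (b := t)
      (show -1 < b - 1 by linarith)).comp_sub_left t
    rw [sub_zero, sub_self] at h
    exact h.symm.const_mul _
  have hint : IntegrableOn (fun y => y ^ (a - 1) * (t - y) ^ (b - 1)) (Icc 0 t) := by
    rw [← intervalIntegrable_iff_integrableOn_Icc_of_le ht.le]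
    refine hdom.mono_fun (by fun_prop) ?_
    rw [uIoc_of_le ht.le]
    refine (ae_restrict_iff' measurableSet_Ioc).mpr (ae_of_all _ fun y hy => ?_)
    have hty : 0 ≤ t - y := sub_nonneg.mpr hy.2
    dsimp only
    rw [Real.norm_of_nonneg (mul_nonneg (rpow_nonneg hy.1.le _) (rpow_nonneg hty _)),
      Real.norm_of_nonneg (mul_nonneg (rpow_nonneg ht.le _) (rpow_nonneg hty _))]
    gcongr
    exacts [hy.1.le, hy.2]
  have hnonneg : ∀ᵐ y ∂volume.restrict (Icc 0 t), 0 ≤ y ^ (a - 1) * (t - y) ^ (b - 1) :=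
    (ae_restrict_iff' measurableSet_Icc).mpr <| ae_of_all _ fun y hy =>
      mul_nonneg (rpow_nonneg hy.1 _) (rpow_nonneg (sub_nonneg.mpr hy.2) _)
  rw [← ofReal_integral_eq_lintegral_ofReal hint hnonneg, integral_Icc_eq_integral_Ioc,
    ← intervalIntegral.integral_of_le ht.le, integral_rpow_mul_sub_rpow_eq_mul_Beta a b ht]

theorem lintegral_Ico_rpow_sub {v e : ℝ} (hv : 0 ≤ v) (he : -1 < e) :
    ∫⁻ y in Ico 0 v, ENNReal.ofReal ((v - y) ^ e) = ENNReal.ofReal (v ^ (e + 1) / (e + 1)) := by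
  have hint : IntegrableOn (fun y => (v - y) ^ e) (Ioc 0 v) := by
    rw [← intervalIntegrable_iff_integrableOn_Ioc_of_le hv]
    have h := (intervalIntegral.intervalIntegrable_rpow' (a := 0) (b := v) he).comp_sub_left v
    rw [sub_zero, sub_self] at h
    exact h.symm
  have hnonneg : ∀ᵐ y ∂volume.restrict (Ioc 0 v), 0 ≤ (v - y) ^ e :=
    (ae_restrict_iff' measurableSet_Ioc).mpr <| ae_of_all _ fun y hy =>
      rpow_nonneg (sub_nonneg.mpr hy.2) _
  rw [setLIntegral_congr Ico_ae_eq_Ioc, ← ofReal_integral_eq_lintegral_ofReal hint hnonneg,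
    ← intervalIntegral.integral_of_le hv, intervalIntegral.integral_comp_sub_left (· ^ e),
    sub_self, sub_zero, integral_rpow (Or.inl he), zero_rpow (by linarith), sub_zero]

theorem rpow_sub_mul_posRpow_sub_le_indicator {a t u y : ℝ} (ha : a < 0) (hy : y ∈ Icc 0 t) :
    (t - y) ^ a * posRpow (u - y) a ≤
      (Ico 0 (min u t)).indicator (fun y => (min u t - y) ^ (2 * a)) y := by
  by_cases hyv : y < min u t
  · have hvy : 0 < min u t - y := sub_pos.mpr hyv
    have hut : min u t ≤ u ∧ min u t ≤ t := ⟨min_le_left u t, min_le_right u t⟩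
    rw [indicator_of_mem (show y ∈ Ico 0 (min u t) from ⟨hy.1, hyv⟩),
      posRpow_of_pos (by linarith), two_mul, rpow_add hvy]
    exact mul_le_mul (rpow_le_rpow_of_nonpos hvy (by linarith) ha.le)
      (rpow_le_rpow_of_nonpos hvy (by linarith) ha.le) (rpow_nonneg (by linarith) _)
      (rpow_nonneg hvy.le _)
  · rw [indicator_of_notMem fun h => hyv h.2]
    rcases min_le_iff.mp (not_lt.mp hyv) with hu | htt
    · rw [posRpow_of_nonpos (by linarith), mul_zero]
    · rw [show t - y = 0 by linarith [hy.2], zero_rpow ha.ne, zero_mul]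

theorem lintegral_Icc_rpow_sub_mul_posRpow_sub_le {H t : ℝ} (hH0 : 0 < H) (hH1 : H < 1 / 2)
    (ht : 0 < t) (u : ℝ) :
    ∫⁻ y in Icc 0 t, ‖(t - y) ^ (H - 1 / 2) * posRpow (u - y) (H - 1 / 2)‖ₑ ≤
      ENNReal.ofReal (u ^ (2 * H) / (2 * H)) := by
  rcases le_or_gt u 0 with hu | hu
  · calc _ = ∫⁻ _ in Icc 0 t, 0 := setLIntegral_congr_fun measurableSet_Icc fun y hy => by
            rw [posRpow_of_nonpos (by linarith [hy.1]), mul_zero, enorm_zero]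
      _ ≤ _ := by rw [lintegral_zero]; exact bot_le
  set v := min u t
  have hv : 0 < v := lt_min hu ht
  calc ∫⁻ y in Icc 0 t, ‖(t - y) ^ (H - 1 / 2) * posRpow (u - y) (H - 1 / 2)‖ₑ
      ≤ ∫⁻ y in Icc 0 t, (Ico 0 v).indicator
          (fun y => ENNReal.ofReal ((v - y) ^ (2 * (H - 1 / 2)))) y := by
        refine setLIntegral_mono' measurableSet_Icc fun y hy => ?_
        rw [Real.enorm_of_nonneg (mul_nonneg (rpow_nonneg (by linarith [hy.2]) _)
          (posRpow_nonneg _ _))]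
        exact (ENNReal.ofReal_le_ofReal
          (rpow_sub_mul_posRpow_sub_le_indicator (by linarith) hy)).trans_eq
            (congrFun (indicator_comp_of_zero ENNReal.ofReal_zero) y).symm
    _ ≤ ∫⁻ y, (Ico 0 v).indicator (fun y => ENNReal.ofReal ((v - y) ^ (2 * (H - 1 / 2)))) y :=
        setLIntegral_le_lintegral _ _
    _ = ENNReal.ofReal (v ^ (2 * H) / (2 * H)) := by
        rw [lintegral_indicator measurableSet_Ico, lintegral_Ico_rpow_sub hv.le (by linarith)]
        ring_nf
    _ ≤ ENNReal.ofReal (u ^ (2 * H) / (2 * H)) := by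
        gcongr
        exact min_le_left u t

noncomputable def blockBound (H t : ℝ) (d : ℕ) : ℝ :=
  t ^ (2 * H * d + H + 1 / 2) / (2 * H) ^ d * Beta (2 * H * d + 1) (H + 1 / 2)

theorem blockBound_nonneg {H t : ℝ} (hH : 0 < H) (ht : 0 < t) (d : ℕ) : 0 ≤ blockBound H t d :=
  mul_nonneg (div_nonneg (rpow_nonneg ht.le _) (by positivity)) (Beta_nonneg _ _)

theorem prod_blockBound {κ : Type*} (s : Finset κ) {H t : ℝ} (ht : 0 < t) (d : κ → ℕ) :
    ∏ l ∈ s, blockBound H t (d l) =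
      t ^ (2 * H * ∑ l ∈ s, (d l : ℝ) + #s * (H + 1 / 2)) / (2 * H) ^ (∑ l ∈ s, d l) *
        ∏ l ∈ s, Beta (2 * H * d l + 1) (H + 1 / 2) := by
  simp only [blockBound]
  rw [prod_mul_distrib, prod_div_distrib, prod_pow_eq_pow_sum,
    ← rpow_sum_of_pos ht]
  simp only [sum_add_distrib, ← mul_sum, sum_const, nsmul_eq_mul]
  ring_nf

theorem lintegral_Icc_rpow_sub_mul_pow_eq_blockBound {H t : ℝ} (hH0 : 0 < H) (hH1 : H < 1 / 2)
    (ht : 0 < t) (d : ℕ) :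
    ∫⁻ y in Icc 0 t, ‖(t - y) ^ (H - 1 / 2)‖ₑ * ENNReal.ofReal (y ^ (2 * H) / (2 * H)) ^ d =
      ENNReal.ofReal (blockBound H t d) := by
  have hpt : ∀ y ∈ Icc 0 t,
      ‖(t - y) ^ (H - 1 / 2)‖ₑ * ENNReal.ofReal (y ^ (2 * H) / (2 * H)) ^ d =
        ENNReal.ofReal (((2 * H) ^ d)⁻¹) *
          ENNReal.ofReal (y ^ ((2 * H * d + 1) - 1) * (t - y) ^ ((H + 1 / 2) - 1)) := by
    intro y hy
    rw [Real.enorm_of_nonneg (rpow_nonneg (sub_nonneg.mpr hy.2) _),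
      ← ENNReal.ofReal_pow (div_nonneg (rpow_nonneg hy.1 _) (by positivity)),
      ← ENNReal.ofReal_mul (rpow_nonneg (sub_nonneg.mpr hy.2) _),
      ← ENNReal.ofReal_mul (by positivity), div_pow, ← rpow_natCast, ← rpow_mul hy.1]
    congr 1
    rw [show 2 * H * d + 1 - 1 = 2 * H * d by ring, show H + 1 / 2 - 1 = H - 1 / 2 by ring]
    ring
  rw [setLIntegral_congr_fun measurableSet_Icc hpt,
    lintegral_const_mul' _ _ ENNReal.ofReal_ne_top,
    lintegral_Icc_rpow_mul_sub_rpow (by nlinarith) (by linarith) ht,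
    ← ENNReal.ofReal_mul (by positivity), blockBound]
  congr 1
  rw [show 2 * H * d + 1 + (H + 1 / 2) - 1 = 2 * H * d + H + 1 / 2 by ring]
  ring

/-- The factor of the integrand coming from the block `S` with marked point `c`. -/
noncomputable def blockKernel {ι : Type*} [DecidableEq ι] (H t : ℝ) (c : ι) (S : Finset ι)
    (s : ι → ℝ) : ℝ :=
  (t - s c) ^ (H - 1 / 2) *
    ∏ j ∈ S.erase c, (t - s j) ^ (H - 1 / 2) * posRpow (s c - s j) (H - 1 / 2)

section BlockKernel

variable {ι : Type*} [DecidableEq ι] {H t : ℝ} {c : ι} {S : Finset ι}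

theorem measurable_blockKernel : Measurable (blockKernel H t c S) := by
  unfold blockKernel; fun_prop

theorem dependsOn_blockKernel (hc : c ∈ S) : DependsOn (blockKernel H t c S) S := by
  intro x y h
  simp only [blockKernel, h c hc]
  congr 1
  exact prod_congr rfl fun j hj => by rw [h j (mem_of_mem_erase hj)]

theorem lmarginal_enorm_blockKernel_le (hH0 : 0 < H) (hH1 : H < 1 / 2) (ht : 0 < t)
    (hc : c ∈ S) :
    ∫⋯∫⁻_S, (fun s => ‖blockKernel H t c S s‖ₑ) ∂(fun _ => volume.restrict (Icc 0 t)) ≤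
      fun _ => ENNReal.ofReal (blockBound H t #(S.erase c)) := by
  set S' := S.erase c
  set μ : ι → Measure ℝ := fun _ => volume.restrict (Icc 0 t)
  set K : ι → (ι → ℝ) → ℝ≥0∞ := fun j s =>
    ‖(t - s j) ^ (H - 1 / 2) * posRpow (s c - s j) (H - 1 / 2)‖ₑ
  set C : ℝ → ℝ≥0∞ := fun u => ENNReal.ofReal (u ^ (2 * H) / (2 * H))
  have hcS' : c ∉ S' := notMem_erase c S
  have hunmarked : ∫⋯∫⁻_S', (fun s => ∏ j ∈ S', K j s) ∂μ ≤ fun s => ∏ j ∈ S', C (s c) := by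
    have hS' : S'.biUnion (fun j => {j}) = S' := biUnion_singleton_eq_self
    have h := lmarginal_biUnion_prod_le (μ := μ) (L := S') (S := fun j => {j}) (F := K)
      (c := fun _ s => C (s c)) (pairwiseDisjoint_singleton_iff_injOn.mpr (injOn_id _))
      (fun j => by fun_prop) ?_ ?_ ?_
    · rwa [hS'] at h
    · intro j _ x y h
      rw [hS'] at h
      simp only [K, h j (by simp), h c (by simp [hcS'])]
    · intro j _ x y h
      rw [hS'] at h
      simp only [h c hcS']
    · intro j hj x
      have hjc : c ≠ j := fun hcj => hcS' (hcj ▸ hj)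
      simp only [lmarginal_singleton, K, update_self, update_of_ne hjc]
      exact lintegral_Icc_rpow_sub_mul_posRpow_sub_le hH0 hH1 ht (x c)
  intro x
  calc (∫⋯∫⁻_S, (fun s => ‖blockKernel H t c S s‖ₑ) ∂μ) x
      = (∫⋯∫⁻_(insert c S'),
          (fun s => ‖(t - s c) ^ (H - 1 / 2)‖ₑ * ∏ j ∈ S', K j s) ∂μ) x := by
        simp only [blockKernel, enorm_mul, enorm_prod, insert_erase hc, S', K]
    _ = ∫⁻ y in Icc 0 t, ‖(t - y) ^ (H - 1 / 2)‖ₑ *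
          (∫⋯∫⁻_S', (fun s => ∏ j ∈ S', K j s) ∂μ) (update x c y) := by
        rw [lmarginal_insert _ (by fun_prop) hcS', lmarginal_mul_of_dependsOn (by fun_prop)
          fun x y h => by simp only [h c hcS']]
        simp [μ]
    _ ≤ ∫⁻ y in Icc 0 t, ‖(t - y) ^ (H - 1 / 2)‖ₑ * C y ^ #S' := by
        gcongr with y
        exact (hunmarked (update x c y)).trans_eq (by simp [prod_const])
    _ = _ := lintegral_Icc_rpow_sub_mul_pow_eq_blockBound hH0 hH1 ht _

end BlockKernel

theorem integral_partition_kernel_prod_le_general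
    (H t : ℝ) (hH : H ∈ Set.Ioo (0 : ℝ) (1/2)) (ht : 0 < t)
    (n k : ℕ)
    (I : Fin k → Finset (Fin n))
    (hdisj : ∀ l l' : Fin k, l ≠ l' → Disjoint (I l) (I l'))
    (hcover : Finset.univ.biUnion I = (Finset.univ : Finset (Fin n)))
    (m : Fin k → Fin n) (hm : ∀ l : Fin k, m l ∈ I l) :
    ∫ s in Set.Icc (0 : Fin n → ℝ) (fun _ => t),
      ∏ l : Fin k,
        ((t - s (m l)) ^ (H - 1/2) *
          ∏ j ∈ (I l).erase (m l),
            (t - s j) ^ (H - 1/2) * posRpow (s (m l) - s j) (H - 1/2)) ≤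
      t ^ (2 * H * ((n : ℝ) - k) + k * (H + 1/2)) / (2 * H) ^ (n - k) *
        ∏ l : Fin k, Beta (2 * H * (((I l).card : ℝ) - 1) + 1) (H + 1/2) := by
  obtain ⟨hH0, hH1⟩ := hH
  have hI : ((univ : Finset (Fin k)) : Set (Fin k)).PairwiseDisjoint I :=
    fun l _ l' _ => hdisj l l'
  set d : Fin k → ℕ := fun l => #((I l).erase (m l))
  have hcount : ∑ l, d l + k = n := by
    simpa [hcover] using sum_card_erase_add_card_eq_card_biUnion hI fun l _ => hm l
  have hcount' : (n : ℝ) - k = ∑ l, (d l : ℝ) := by rw [← hcount]; push_cast; ring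
  have hbound : ∏ l, blockBound H t (d l) = t ^ (2 * H * ((n : ℝ) - k) + k * (H + 1/2)) /
      (2 * H) ^ (n - k) * ∏ l : Fin k, Beta (2 * H * (((I l).card : ℝ) - 1) + 1) (H + 1/2) := by
    simp only [prod_blockBound _ ht, hcount', show n - k = ∑ l, d l by omega, card_univ,
      Fintype.card_fin, d, cast_card_erase_of_mem (hm _)]
  rw [volume_restrict_Icc_eq_pi, ← hbound]
  refine integral_le_of_lintegral_enorm_le (prod_nonneg fun l _ => blockBound_nonneg hH0 ht _) ?_
  calc ∫⁻ s, ‖∏ l, blockKernel H t (m l) (I l) s‖ₑ ∂Measure.pi _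
      = (∫⋯∫⁻_(univ.biUnion I), (fun s => ∏ l, ‖blockKernel H t (m l) (I l) s‖ₑ)
          ∂fun _ => volume.restrict (Icc 0 t)) 0 := by
        rw [hcover, lintegral_eq_lmarginal_univ 0]
        simp only [enorm_prod, Pi.zero_apply]
    _ ≤ ∏ l, ENNReal.ofReal (blockBound H t (d l)) :=
        lmarginal_biUnion_prod_le hI (fun _ => measurable_blockKernel.enorm)
          (fun l _ x y h => congrArg _ (dependsOn_blockKernel (hm l) fun i hi => h i (Or.inl hi)))
          (fun _ _ _ _ _ => rfl) (fun l _ => lmarginal_enorm_blockKernel_le hH0 hH1 ht (hm l)) 0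
    _ = _ := (ENNReal.ofReal_prod_of_nonneg fun l _ => blockBound_nonneg hH0 ht _).symm

/-- Bound on the multiple integral of products of Riemann–Liouville
kernels associated with a partition `I₁, …, I_k` of `{1,…,n}` with marked points
`m_l ∈ I_l`:
`∫_{[0,t]ⁿ} ∏ₗ [(t-s_{mₗ})^(H-1/2) ∏_{j ∈ Iₗ∖{mₗ}} (t-sⱼ)^(H-1/2) (s_{mₗ}-sⱼ)₊^(H-1/2)] ds
  ≤ (2H)^{-(n-k)} t^(2H(n-k)+k(H+1/2)) ∏ₗ B(2H(n_l-1)+1, H+1/2)`. -/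
theorem integral_partition_kernel_prod_le
    (H t : ℝ) (hH : H ∈ Set.Ioo (0 : ℝ) (1/2)) (ht : 0 < t)
    (n k : ℕ) (hn : 1 ≤ n) (hk : 1 ≤ k) (hkn : k ≤ n)
    (I : Fin k → Finset (Fin n))
    (hdisj : ∀ l l' : Fin k, l ≠ l' → Disjoint (I l) (I l'))
    (hne : ∀ l : Fin k, (I l).Nonempty)
    (hcover : Finset.univ.biUnion I = (Finset.univ : Finset (Fin n)))
    (m : Fin k → Fin n) (hm : ∀ l : Fin k, m l ∈ I l) :
    ∫ s in Set.Icc (0 : Fin n → ℝ) (fun _ => t),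
      ∏ l : Fin k,
        ((t - s (m l)) ^ (H - 1/2) *
          ∏ j ∈ (I l).erase (m l),
            (t - s j) ^ (H - 1/2) * posRpow (s (m l) - s j) (H - 1/2)) ≤
      t ^ (2 * H * ((n : ℝ) - k) + k * (H + 1/2)) / (2 * H) ^ (n - k) *
        ∏ l : Fin k, Beta (2 * H * (((I l).card : ℝ) - 1) + 1) (H + 1/2) :=
  integral_partition_kernel_prod_le_general H t hH ht n k I hdisj hcover m hm
end

section
/- For every C > 0, the double series ∑_{n=1}^∞ ∑_{k=1}^n (C^n / n!) · (4(k+3))^{(k+3)/2} · S(n,k) is finite, where S(n,k) := (1/k!) ∑_{j=0}^k (−1)^j · binom(k,j) · (k−j)^n denotes the Stirling number of the second kind (the number of partitions of an n-element set into k nonempty blocks, in particular S(n,k) ≥ 0). -/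
/-!
By the triangle inequality `|S(n,k)| ≤ 2^k k^n / k!`, so the `(n,k)` term is dominated by
`(|C| k)^n / n! · 2^k w_k / k!` with `w_k = (4(k+3))^((k+3)/2)`. Summing over `n` first gives
`(2 e^|C|)^k w_k / k!`, which is summable by the ratio test because `w_{k+1} / w_k = O(√k)`
(as `(1 + 1/m)^m ≤ e`); Tonelli for nonnegative double series then bounds the original series.
-/

open Real

/-- Stirling numbers of the second kind, via the explicit alternating-sum formula
`S(n,k) = (1/k!) ∑_{j=0}^k (-1)^j (k choose j) (k-j)^n`. -/
noncomputable def stirlingSecond (n k : ℕ) : ℝ :=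
  (1 / (k.factorial : ℝ)) *
    ∑ j ∈ Finset.range (k + 1), (-1 : ℝ) ^ j * (Nat.choose k j : ℝ) * ((k : ℝ) - j) ^ n

open Filter Topology Finset
open scoped Nat

theorem abs_stirlingSecond_le (n k : ℕ) : |stirlingSecond n k| ≤ 2 ^ k * (k : ℝ) ^ n / k ! := by
  have hterm : ∀ j ∈ range (k + 1),
      |(-1 : ℝ) ^ j * (k.choose j : ℝ) * ((k : ℝ) - j) ^ n| ≤ (k.choose j : ℝ) * (k : ℝ) ^ n := by
    intro j hj
    have hjk : (j : ℝ) ≤ k := by exact_mod_cast Nat.lt_succ_iff.mp (mem_range.mp hj)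
    rw [abs_mul, abs_mul, abs_pow, abs_neg, abs_one, one_pow, one_mul, Nat.abs_cast, abs_pow]
    gcongr
    rw [abs_of_nonneg (by linarith)]
    linarith
  calc |stirlingSecond n k|
      = |∑ j ∈ range (k + 1), (-1 : ℝ) ^ j * (k.choose j : ℝ) * ((k : ℝ) - j) ^ n| / k ! := by
        rw [stirlingSecond, one_div_mul_eq_div, abs_div, Nat.abs_cast]
    _ ≤ (∑ j ∈ range (k + 1), (k.choose j : ℝ) * (k : ℝ) ^ n) / k ! := by
        gcongr
        exact (abs_sum_le_sum_abs _ _).trans (sum_le_sum hterm)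
    _ = 2 ^ k * (k : ℝ) ^ n / k ! := by
        rw [← sum_mul, ← Nat.cast_sum, Nat.sum_range_choose]; push_cast; ring

theorem rpow_add_le_exp_mul_rpow {x a p : ℝ} (hx : 0 < x) (ha : 0 ≤ a) (hp : 0 ≤ p) :
    (x + a) ^ p ≤ exp (a / x * p) * x ^ p := by
  rw [show x + a = (1 + a / x) * x by field_simp, mul_rpow (by positivity) hx.le, exp_mul]
  gcongr
  linarith [add_one_le_exp (a / x)]

/-- The bound `(4m)^(m/2)` on the Burkholder–Davis–Gundy constant `𝔟_m`, at `m = k + 3`. -/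
noncomputable def bdgWeight (k : ℕ) : ℝ := (4 * ((k : ℝ) + 3)) ^ (((k : ℝ) + 3) / 2)

theorem bdgWeight_nonneg (k : ℕ) : 0 ≤ bdgWeight k := by
  unfold bdgWeight; positivity

theorem bdgWeight_succ_le (k : ℕ) :
    bdgWeight (k + 1) ≤ 4 * exp (1 / 2) * √((k : ℝ) + 1) * bdgWeight k := by
  have hsqrt : (4 * ((k : ℝ) + 3) + 4) ^ (1 / 2 : ℝ) ≤ 4 * √((k : ℝ) + 1) := by
    rw [← sqrt_eq_rpow, sqrt_le_iff, mul_pow, sq_sqrt (by positivity)]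
    exact ⟨by positivity, by linarith⟩
  have hpow : (4 * ((k : ℝ) + 3) + 4) ^ (((k : ℝ) + 3) / 2) ≤ exp (1 / 2) * bdgWeight k := by
    rw [bdgWeight]
    convert rpow_add_le_exp_mul_rpow (by positivity : (0 : ℝ) < 4 * ((k : ℝ) + 3))
      (by norm_num : (0 : ℝ) ≤ 4) (by positivity : (0 : ℝ) ≤ ((k : ℝ) + 3) / 2) using 3
    field_simp
  calc bdgWeight (k + 1)
      = (4 * ((k : ℝ) + 3) + 4) ^ (1 / 2 : ℝ) * (4 * ((k : ℝ) + 3) + 4) ^ (((k : ℝ) + 3) / 2) := by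
        rw [bdgWeight, ← rpow_add (by positivity)]; push_cast; ring_nf
    _ ≤ 4 * √((k : ℝ) + 1) * (exp (1 / 2) * bdgWeight k) :=
        mul_le_mul hsqrt hpow (by positivity) (by positivity)
    _ = 4 * exp (1 / 2) * √((k : ℝ) + 1) * bdgWeight k := by ring

theorem summable_of_norm_succ_le_of_tendsto_zero {E : Type*} [SeminormedAddCommGroup E]
    [CompleteSpace E] {f : ℕ → E} {ρ : ℕ → ℝ} (hρ : Tendsto ρ atTop (𝓝 0))
    (h : ∀ n, ‖f (n + 1)‖ ≤ ρ n * ‖f n‖) : Summable f := by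
  refine summable_of_ratio_norm_eventually_le (r := 1 / 2) (by norm_num) ?_
  filter_upwards [hρ.eventually (Iic_mem_nhds (by norm_num : (0 : ℝ) < 1 / 2))] with n hn
  exact (h n).trans (mul_le_mul_of_nonneg_right hn (norm_nonneg _))

theorem summable_pow_mul_bdgWeight_div_factorial (x : ℝ) :
    Summable fun k : ℕ => x ^ k * bdgWeight k / k ! := by
  refine summable_of_norm_succ_le_of_tendsto_zero
    (ρ := fun k => |x| * (4 * exp (1 / 2)) / √((k : ℝ) + 1)) ?_ fun k => ?_
  · exact tendsto_const_nhds.div_atTop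
      (tendsto_sqrt_atTop.comp (tendsto_atTop_add_const_right _ 1 tendsto_natCast_atTop_atTop))
  · have hs0 : 0 < √((k : ℝ) + 1) := sqrt_pos.2 (by positivity)
    simp only [norm_div, norm_mul, norm_pow, Real.norm_eq_abs, Nat.abs_cast,
      abs_of_nonneg (bdgWeight_nonneg _), Nat.factorial_succ, Nat.cast_mul, Nat.cast_succ]
    rw [abs_of_pos (by positivity : (0 : ℝ) < k + 1)]
    calc |x| ^ (k + 1) * bdgWeight (k + 1) / (((k : ℝ) + 1) * k !)
        ≤ |x| ^ (k + 1) * (4 * exp (1 / 2) * √((k : ℝ) + 1) * bdgWeight k) /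
            (((k : ℝ) + 1) * k !) := by
          gcongr
          exact bdgWeight_succ_le k
      _ = _ := by
          field_simp
          rw [sq_sqrt (by positivity)]
          ring

theorem summable_sum_of_hasSum_of_nonneg {ι κ : Type*} {a : ι → κ → ℝ} {b : κ → ℝ}
    (ha : ∀ i k, 0 ≤ a i k) (hab : ∀ k, HasSum (fun i => a i k) (b k)) (hb : Summable b)
    (s : ι → Finset κ) : Summable fun i => ∑ k ∈ s i, a i k := by
  have hprod : Summable fun p : κ × ι => a p.2 p.1 :=
    (summable_prod_of_nonneg fun p => ha p.2 p.1).2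
      ⟨fun k => (hab k).summable, by simpa only [(hab _).tsum_eq] using hb⟩
  exact .of_nonneg_of_le (fun i => sum_nonneg fun k _ => ha i k)
    (fun i => (hprod.prod_symm.prod_factor i).sum_le_tsum (s i) fun k _ => ha i k)
    hprod.prod_symm.prod

theorem summable_chaos_expansion_series_general (C : ℝ) :
    Summable (fun n : ℕ =>
      ∑ k ∈ Finset.Icc 1 n,
        (C ^ n / (n.factorial : ℝ)) * (4 * ((k : ℝ) + 3)) ^ (((k : ℝ) + 3) / 2) *
          stirlingSecond n k) := by
  have hcol (k : ℕ) : HasSum (fun n : ℕ => (|C| * k) ^ n / n ! * (2 ^ k * bdgWeight k / k !))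
      ((2 * exp |C|) ^ k * bdgWeight k / k !) := by
    have hsum : (2 * exp |C|) ^ k * bdgWeight k / k ! =
        exp (|C| * k) * (2 ^ k * bdgWeight k / k !) := by
      rw [mul_comm |C|, exp_nat_mul]
      ring
    rw [hsum, exp_eq_exp_ℝ]
    exact (NormedSpace.expSeries_div_hasSum_exp (|C| * k)).mul_right _
  have hnonneg (n k : ℕ) : 0 ≤ (|C| * k) ^ n / n ! * (2 ^ k * bdgWeight k / k !) := by
    have := bdgWeight_nonneg k
    positivity
  refine .of_norm_bounded (summable_sum_of_hasSum_of_nonneg hnonneg hcol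
    (summable_pow_mul_bdgWeight_div_factorial _) fun n => Icc 1 n) fun n => ?_
  refine (norm_sum_le _ _).trans (sum_le_sum fun k _ => ?_)
  calc ‖C ^ n / n ! * bdgWeight k * stirlingSecond n k‖
      = |C| ^ n / n ! * bdgWeight k * |stirlingSecond n k| := by
        rw [Real.norm_eq_abs, abs_mul, abs_mul, abs_div, abs_pow, Nat.abs_cast,
          abs_of_nonneg (bdgWeight_nonneg k)]
    _ ≤ |C| ^ n / n ! * bdgWeight k * (2 ^ k * (k : ℝ) ^ n / k !) := by
        have := bdgWeight_nonneg k
        gcongr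
        exact abs_stirlingSecond_le n k
    _ = (|C| * k) ^ n / n ! * (2 ^ k * bdgWeight k / k !) := by ring

/-- For every `C > 0`, the double series
`∑_{n≥1} ∑_{k=1}^n (Cⁿ/n!) (4(k+3))^((k+3)/2) S(n,k)` is finite. -/
theorem summable_chaos_expansion_series (C : ℝ) (hC : 0 < C) :
    Summable (fun n : ℕ =>
      ∑ k ∈ Finset.Icc 1 n,
        (C ^ n / (n.factorial : ℝ)) * (4 * ((k : ℝ) + 3)) ^ (((k : ℝ) + 3) / 2) *
          stirlingSecond n k) :=
  summable_chaos_expansion_series_general C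
end
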